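/- arXiv:2302.04342 — 7 statements merged into one kernel-verified Lean document; each statement's English description precedes it below -/
import Mathlib

section
/- For s ∈ (√2, 2], the tent map restricted to its core [T_s²(1/2), T_s(1/2)] is topologically exact: for every nondegenerate closed subinterval J of the core, there exists n ≥ 1 such that T_sⁿ(J) equals the whole core. In particular, if J ⊂ [c₂,c₁] is an interval not containing the core, then the length of T_s²(J) is strictly greater than the length of J whenever T_s²(J) ≠ [c₂,c₁]. -/
noncomputable def tent (s x : ℝ) : ℝ := s * (1 - |1 - 2 * x|) / 2

open Set MeasureTheory

lemma tent_left {s x : ℝ} (hx : x ≤ 1/2) : tent s x = s * x := by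
  have h : |1 - 2*x| = 1 - 2*x := abs_of_nonneg (by linarith)
  unfold tent; rw [h]; ring

lemma tent_right {s x : ℝ} (hx : 1/2 ≤ x) : tent s x = s * (1 - x) := by
  have h : |1 - 2*x| = -(1 - 2*x) := abs_of_nonpos (by linarith)
  unfold tent; rw [h]; ring

lemma img_left {s u v : ℝ} (hs : 0 < s) (hv : v ≤ 1/2) :
    tent s '' Icc u v = Icc (s*u) (s*v) := by
  rw [← Set.image_mul_left_Icc' hs]
  exact Set.image_congr fun x hx => tent_left (hx.2.trans hv)

lemma img_right {s u v : ℝ} (hs : 0 < s) (hu : 1/2 ≤ u) :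
    tent s '' Icc u v = Icc (s*(1-v)) (s*(1-u)) := by
  have h : tent s '' Icc u v = ((s * ·) ∘ (fun x => 1 - x)) '' Icc u v :=
    Set.image_congr fun x hx => tent_right (hu.trans hx.1)
  rw [h, Set.image_comp, Set.image_const_sub_Icc, Set.image_mul_left_Icc' hs]

lemma img_mid {s u v : ℝ} (hs : 0 < s) (hu : u ≤ 1/2) (hv : 1/2 ≤ v) :
    tent s '' Icc u v = Icc (min (s*u) (s*(1-v))) (s/2) := by
  have hsplit : Icc u v = Icc u (1/2) ∪ Icc (1/2) v := (Set.Icc_union_Icc_eq_Icc hu hv).symm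
  rw [hsplit, Set.image_union, img_left hs le_rfl, img_right hs le_rfl]
  have h1 : s * (1/2) = s/2 := by ring
  have h2 : s * (1 - 1/2) = s/2 := by ring
  rw [h1, h2]
  ext x
  simp only [Set.mem_union, Set.mem_Icc, min_le_iff]
  constructor
  · rintro (⟨h, h'⟩ | ⟨h, h'⟩)
    · exact ⟨Or.inl h, h'⟩
    · exact ⟨Or.inr h, h'⟩
  · rintro ⟨h | h, h'⟩
    · exact Or.inl ⟨h, h'⟩
    · exact Or.inr ⟨h, h'⟩

lemma core_inv {s : ℝ} (h1 : 1 ≤ s) (h2 : s ≤ 2) :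
    tent s '' Icc ((2-s)*s/2) (s/2) = Icc ((2-s)*s/2) (s/2) := by
  have hs : 0 < s := by linarith
  have hc2 : (2-s)*s/2 ≤ 1/2 := by nlinarith [sq_nonneg (s-1)]
  have hc1 : 1/2 ≤ s/2 := by linarith
  rw [img_mid hs hc2 hc1]
  congr 1
  have h3 : s * (1 - s/2) = (2-s)*s/2 := by ring
  rw [h3, min_eq_right]
  nlinarith [mul_nonneg (mul_nonneg (by linarith : (0:ℝ) ≤ 2-s) hs.le)
    (by linarith : (0:ℝ) ≤ s-1)]

lemma it2 (s : ℝ) (A : Set ℝ) : (tent s)^[2] '' A = tent s '' (tent s '' A) := by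
  rw [show (tent s)^[2] = tent s ∘ tent s from rfl, Set.image_comp]

lemma dich {s u v : ℝ} (hs : s ∈ Set.Ioc (Real.sqrt 2) 2)
    (hu : (2-s)*s/2 ≤ u) (huv : u < v) (hv : v ≤ s/2) :
    (tent s)^[2] '' Icc u v = Icc ((2-s)*s/2) (s/2) ∨
    ∃ u' v', (tent s)^[2] '' Icc u v = Icc u' v' ∧ (2-s)*s/2 ≤ u' ∧ u' < v' ∧ v' ≤ s/2 ∧
      s^2/2 * (v - u) ≤ v' - u' := by
  obtain ⟨hsq, hs2⟩ := hs
  have h0 : 0 < s := lt_of_le_of_lt (Real.sqrt_nonneg 2) hsq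
  have h2s : 2 < s^2 := by
    nlinarith [Real.sq_sqrt (show (0:ℝ) ≤ 2 by norm_num), Real.sqrt_nonneg 2]
  have h1s : 1 < s := by nlinarith
  have hsub2 : (tent s)^[2] '' Icc u v ⊆ Icc ((2-s)*s/2) (s/2) := by
    rw [it2]
    calc tent s '' (tent s '' Icc u v)
        ⊆ tent s '' (tent s '' Icc ((2-s)*s/2) (s/2)) :=
          Set.image_mono (Set.image_mono (Set.Icc_subset_Icc hu hv))
      _ = Icc ((2-s)*s/2) (s/2) := by
          rw [core_inv h1s.le hs2, core_inv h1s.le hs2]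
  have fin : ∀ a b : ℝ, tent s '' (tent s '' Icc u v) = Icc a b →
      s^2/2 * (v - u) ≤ b - a →
      ((tent s)^[2] '' Icc u v = Icc ((2-s)*s/2) (s/2) ∨
       ∃ u' v', (tent s)^[2] '' Icc u v = Icc u' v' ∧ (2-s)*s/2 ≤ u' ∧ u' < v' ∧ v' ≤ s/2 ∧
         s^2/2 * (v - u) ≤ v' - u') := by
    intro a b heq hlen
    right
    have hab : a < b := by nlinarith
    have hsub := hsub2
    rw [it2, heq] at hsub
    obtain ⟨ha, hb⟩ := (Set.Icc_subset_Icc_iff hab.le).mp hsub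
    exact ⟨a, b, by rw [it2]; exact heq, ha, hab, hb, hlen⟩
  rcases le_or_gt v (1/2) with hv2 | hv2
  · have hTJ : tent s '' Icc u v = Icc (s*u) (s*v) := img_left h0 hv2
    rcases le_or_gt (s*v) (1/2) with hb | hb
    · refine fin (s*(s*u)) (s*(s*v)) ?_ ?_
      · rw [hTJ, img_left h0 hb]
      · nlinarith [mul_nonneg (sq_nonneg s) (by linarith : (0:ℝ) ≤ v - u)]
    · rcases le_or_gt (1/2) (s*u) with ha | ha
      · refine fin (s*(1-s*v)) (s*(1-s*u)) ?_ ?_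
        · rw [hTJ, img_right h0 ha]
        · nlinarith [mul_nonneg (sq_nonneg s) (by linarith : (0:ℝ) ≤ v - u)]
      · refine fin (min (s*(s*u)) (s*(1-s*v))) (s/2) ?_ ?_
        · rw [hTJ, img_mid h0 ha.le hb.le]
        · rcases min_cases (s*(s*u)) (s*(1-s*v)) with ⟨hm, hc⟩ | ⟨hm, hc⟩ <;>
            rw [hm] <;> nlinarith
  · rcases le_or_gt (1/2) u with hu2 | hu2
    · have hTJ : tent s '' Icc u v = Icc (s*(1-v)) (s*(1-u)) := img_right h0 hu2
      rcases le_or_gt (s*(1-u)) (1/2) with hb | hb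
      · refine fin (s*(s*(1-v))) (s*(s*(1-u))) ?_ ?_
        · rw [hTJ, img_left h0 hb]
        · nlinarith [mul_nonneg (sq_nonneg s) (by linarith : (0:ℝ) ≤ v - u)]
      · rcases le_or_gt (1/2) (s*(1-v)) with ha | ha
        · refine fin (s*(1-s*(1-u))) (s*(1-s*(1-v))) ?_ ?_
          · rw [hTJ, img_right h0 ha]
          · nlinarith [mul_nonneg (sq_nonneg s) (by linarith : (0:ℝ) ≤ v - u)]
        · refine fin (min (s*(s*(1-v))) (s*(1-s*(1-u)))) (s/2) ?_ ?_
          · rw [hTJ, img_mid h0 ha.le hb.le]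
          · rcases min_cases (s*(s*(1-v))) (s*(1-s*(1-u))) with ⟨hm, hc⟩ | ⟨hm, hc⟩ <;>
              rw [hm] <;> nlinarith
    · have hTJ : tent s '' Icc u v = Icc (min (s*u) (s*(1-v))) (s/2) :=
        img_mid h0 hu2.le hv2.le
      rcases le_or_gt (min (s*u) (s*(1-v))) (1/2) with hm | hm
      · left
        refine Set.Subset.antisymm hsub2 ?_
        rw [it2, hTJ]
        calc Icc ((2-s)*s/2) (s/2) = tent s '' Icc (1/2) (s/2) := by
              rw [img_right h0 le_rfl]; congr 1 <;> ring
          _ ⊆ tent s '' Icc (min (s*u) (s*(1-v))) (s/2) :=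
              Set.image_mono (Set.Icc_subset_Icc hm le_rfl)
      · refine fin (s*(1-(s/2))) (s*(1-min (s*u) (s*(1-v)))) ?_ ?_
        · rw [hTJ, img_right h0 hm.le]
        · rcases min_cases (s*u) (s*(1-v)) with ⟨hm', hc⟩ | ⟨hm', hc⟩
          · rw [hm']; nlinarith [mul_le_mul_of_nonneg_left hc h0.le]
          · rw [hm']; nlinarith [mul_le_mul_of_nonneg_left hc.le h0.le]

/-- For `s ∈ (√2, 2]`, the tent map is topologically exact on its core
`[c₂, c₁] = [(2-s)s/2, s/2]`; moreover every nondegenerate subinterval whose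
second image is not the whole core has its length strictly increased by `T_s²`. -/
theorem stmt6 (s : ℝ) (hs : s ∈ Ioc (Real.sqrt 2) 2) :
    (∀ u v : ℝ, (2 - s) * s / 2 ≤ u → u < v → v ≤ s / 2 →
      ∃ n : ℕ, 1 ≤ n ∧ (tent s)^[n] '' Icc u v = Icc ((2 - s) * s / 2) (s / 2)) ∧
    (∀ u v : ℝ, (2 - s) * s / 2 ≤ u → u < v → v ≤ s / 2 →
      (tent s)^[2] '' Icc u v ≠ Icc ((2 - s) * s / 2) (s / 2) →
      volume (Icc u v) < volume ((tent s)^[2] '' Icc u v)) := by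
  have h0 : 0 < s := lt_of_le_of_lt (Real.sqrt_nonneg 2) hs.1
  have h2s : 2 < s^2 := by
    nlinarith [Real.sq_sqrt (show (0:ℝ) ≤ 2 by norm_num), Real.sqrt_nonneg 2, hs.1]
  constructor
  · have key : ∀ k : ℕ, ∀ u v : ℝ, (2-s)*s/2 ≤ u → u < v → v ≤ s/2 →
        s/2 - (2-s)*s/2 < (s^2/2)^k * (v - u) →
        ∃ n : ℕ, 1 ≤ n ∧ (tent s)^[n] '' Icc u v = Icc ((2-s)*s/2) (s/2) := by
      intro k
      induction k with
      | zero =>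
        intro u v hu huv hv hbig
        simp only [pow_zero, one_mul] at hbig
        linarith
      | succ k ih =>
        intro u v hu huv hv hbig
        rcases dich hs hu huv hv with h | ⟨u', v', heq, h1, h2, h3, h4⟩
        · exact ⟨2, by norm_num, h⟩
        · obtain ⟨n, hn1, hn2⟩ := ih u' v' h1 h2 h3 (by
            have hp : (0:ℝ) ≤ (s^2/2)^k := by positivity
            have := mul_le_mul_of_nonneg_left h4 hp
            calc s/2 - (2-s)*s/2 < (s^2/2)^(k+1) * (v - u) := hbig
              _ = (s^2/2)^k * (s^2/2 * (v - u)) := by ring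
              _ ≤ (s^2/2)^k * (v' - u') := this)
          refine ⟨n + 2, by omega, ?_⟩
          rw [Function.iterate_add, Set.image_comp, heq, hn2]
    intro u v hu huv hv
    obtain ⟨k, hk⟩ := pow_unbounded_of_one_lt ((s/2 - (2-s)*s/2)/(v-u))
      (show (1:ℝ) < s^2/2 by linarith)
    refine key k u v hu huv hv ?_
    have hvu : (0:ℝ) < v - u := by linarith
    calc s/2 - (2-s)*s/2 = (s/2 - (2-s)*s/2)/(v-u) * (v-u) := (div_mul_cancel₀ _ hvu.ne').symm
      _ < (s^2/2)^k * (v - u) := by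
          exact mul_lt_mul_of_pos_right hk hvu
  · intro u v hu huv hv hne
    rcases dich hs hu huv hv with h | ⟨u', v', heq, h1, h2, h3, h4⟩
    · exact absurd h hne
    · rw [heq, Real.volume_Icc, Real.volume_Icc]
      have hlt : v - u < v' - u' := by nlinarith
      exact (ENNReal.ofReal_lt_ofReal_iff (by linarith)).mpr hlt
end

section
/- For s ∈ (1, √2], the core [c₂, c₁] of the tent map T_s decomposes as J₁ ∪ J₂ with J₁ = [c₂, π_s] and J₂ = [π_s, c₁], where π_s = s/(s+1); moreover T_s(J₁) = J₂ and T_s(J₂) = J₁, and the restriction of T_s² to J₁ is topologically conjugate to the tent map T_{s²} restricted to [0, s²/2]. -/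
open Set

/-!
For `1 < s ≤ √2` the critical orbit satisfies `c₂ ≤ 1/2 ≤ π_s ≤ c₃ ≤ c₁`, where the only
non-trivial inequality `π_s ≤ c₃` amounts to `(s - 1)(2 - s²) ≥ 0`. Since `T_s` is affine on each
side of `c = 1/2`, this makes `T_s` swap `[c₂, π_s]` and `[π_s, c₁]`. On `[c₂, π_s]` the map `T_s²`
is the upside-down tent `x ↦ s - s²/2 + s²|x - 1/2|`, which an affine reflection about `c`
conjugates to `T_{s²}`.
-/

section

variable {s x a b : ℝ}

theorem tent_eq_sub_mul_abs (s x : ℝ) : tent s x = s / 2 - s * |x - 1 / 2| := by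
  rw [tent, show 1 - 2 * x = -(2 * (x - 1 / 2)) by ring, abs_neg, abs_mul, abs_two]
  ring

theorem tent_of_le_half (hx : x ≤ 1 / 2) : tent s x = s * x := by
  rw [tent_eq_sub_mul_abs, abs_of_nonpos (by linarith)]
  ring

theorem tent_of_half_le (hx : 1 / 2 ≤ x) : tent s x = s * (1 - x) := by
  rw [tent_eq_sub_mul_abs, abs_of_nonneg (by linarith)]
  ring

theorem continuous_tent (s : ℝ) : Continuous (tent s) := by
  unfold tent
  fun_prop

theorem monotoneOn_tent (hs : 0 ≤ s) : MonotoneOn (tent s) (Iic (1 / 2)) := by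
  intro x hx y hy hxy
  rw [tent_of_le_half hx, tent_of_le_half hy]
  gcongr

theorem antitoneOn_tent (hs : 0 ≤ s) : AntitoneOn (tent s) (Ici (1 / 2)) := by
  intro x hx y hy hxy
  rw [tent_of_half_le hx, tent_of_half_le hy]
  gcongr

theorem image_tent_Icc_of_le_half (hs : 0 ≤ s) (hab : a ≤ b) (hb : b ≤ 1 / 2) :
    tent s '' Icc a b = Icc (tent s a) (tent s b) :=
  (continuous_tent s).continuousOn.image_Icc_of_monotoneOn hab
    ((monotoneOn_tent hs).mono fun _ hx => hx.2.trans hb)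

theorem image_tent_Icc_of_half_le (hs : 0 ≤ s) (ha : 1 / 2 ≤ a) (hab : a ≤ b) :
    tent s '' Icc a b = Icc (tent s b) (tent s a) :=
  (continuous_tent s).continuousOn.image_Icc_of_antitoneOn hab
    ((antitoneOn_tent hs).mono fun _ hx => ha.trans hx.1)

theorem half_le_self_div_add_one (hs : 1 ≤ s) : 1 / 2 ≤ s / (s + 1) := by
  rw [le_div_iff₀ (by linarith)]
  linarith

theorem tent_self_div_add_one (hs : 1 ≤ s) : tent s (s / (s + 1)) = s / (s + 1) := by
  rw [tent_of_half_le (half_le_self_div_add_one hs)]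
  field_simp
  ring

theorem tent_half (s : ℝ) : tent s (1 / 2) = s / 2 := by
  simp [tent_eq_sub_mul_abs]

theorem tent_tent_half (hs : 1 ≤ s) : tent s (tent s (1 / 2)) = s - s ^ 2 / 2 := by
  rw [tent_half, tent_of_half_le (by linarith)]
  ring

theorem self_div_add_one_le_tent_half (hs : 1 ≤ s) : s / (s + 1) ≤ tent s (1 / 2) := by
  rw [tent_half, div_le_div_iff₀ (by linarith) two_pos]
  nlinarith

theorem tent_tent_half_le_half (hs : 1 ≤ s) : tent s (tent s (1 / 2)) ≤ 1 / 2 := by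
  rw [tent_tent_half hs]
  nlinarith [sq_nonneg (s - 1)]

theorem self_div_add_one_le_tent_tent_tent_half (hs : 1 ≤ s) (hs2 : s ^ 2 ≤ 2) :
    s / (s + 1) ≤ tent s (tent s (tent s (1 / 2))) := by
  rw [tent_of_le_half (tent_tent_half_le_half hs), tent_tent_half hs, div_le_iff₀ (by linarith)]
  nlinarith [mul_nonneg (sub_nonneg.2 hs) (sub_nonneg.2 hs2)]

/-- The affine reflection about `c = 1/2` sending the fixed point `π_s = s/(s+1)` to `0`. -/
noncomputable def tentRenormConj (s x : ℝ) : ℝ := 1 / 2 + (s + 1) / (s - 1) * (1 / 2 - x)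

theorem continuous_tentRenormConj (s : ℝ) : Continuous (tentRenormConj s) := by
  unfold tentRenormConj
  fun_prop

theorem strictAnti_tentRenormConj (hs : 1 < s) : StrictAnti (tentRenormConj s) := by
  intro x y hxy
  have : 0 < (s + 1) / (s - 1) := div_pos (by linarith) (by linarith)
  unfold tentRenormConj
  nlinarith

theorem tentRenormConj_self_div_add_one (hs : 1 < s) : tentRenormConj s (s / (s + 1)) = 0 := by
  have : s - 1 ≠ 0 := by linarith
  have : s + 1 ≠ 0 := by linarith
  unfold tentRenormConj
  field_simp
  ring

theorem tentRenormConj_tent_tent_half (hs : 1 < s) :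
    tentRenormConj s (tent s (tent s (1 / 2))) = s ^ 2 / 2 := by
  have : s - 1 ≠ 0 := by linarith
  rw [tent_tent_half hs.le, tentRenormConj]
  field_simp
  ring

theorem tentRenormConj_tent_tent (hs : 1 < s) (hx : 1 / 2 ≤ tent s x) :
    tentRenormConj s (tent s (tent s x)) = tent (s ^ 2) (tentRenormConj s x) := by
  have hk : 0 < (s + 1) / (s - 1) := div_pos (by linarith) (by linarith)
  have habs : |tentRenormConj s x - 1 / 2| = (s + 1) / (s - 1) * |x - 1 / 2| := by
    rw [tentRenormConj, add_sub_cancel_left, abs_mul, abs_of_pos hk, abs_sub_comm]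
  have : s - 1 ≠ 0 := by linarith
  rw [tent_of_half_le hx, tent_eq_sub_mul_abs (s ^ 2), habs, tent_eq_sub_mul_abs s x,
    tentRenormConj]
  field_simp
  ring

end

/-- Renormalization of the tent map: for `s ∈ (1,√2]` the core decomposes as
`[c₂,π] ∪ [π,c₁]`, the two halves are exchanged by `T_s`, and `T_s²` on the left
half is topologically conjugate to `T_{s²}` on `[0, s²/2]`. -/
theorem stmt8 (s : ℝ) (hs : s ∈ Ioc (1:ℝ) (Real.sqrt 2)) :
    Icc (tent s (tent s (1/2))) (tent s (1/2)) =
      Icc (tent s (tent s (1/2))) (s / (s + 1)) ∪ Icc (s / (s + 1)) (tent s (1/2)) ∧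
    tent s '' Icc (tent s (tent s (1/2))) (s / (s + 1)) =
      Icc (s / (s + 1)) (tent s (1/2)) ∧
    tent s '' Icc (s / (s + 1)) (tent s (1/2)) =
      Icc (tent s (tent s (1/2))) (s / (s + 1)) ∧
    ∃ h : ℝ → ℝ, ContinuousOn h (Icc (tent s (tent s (1/2))) (s / (s + 1))) ∧
      InjOn h (Icc (tent s (tent s (1/2))) (s / (s + 1))) ∧
      h '' Icc (tent s (tent s (1/2))) (s / (s + 1)) = Icc (0:ℝ) (s^2 / 2) ∧
      ∀ x ∈ Icc (tent s (tent s (1/2))) (s / (s + 1)),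
        h ((tent s)^[2] x) = tent (s^2) (h x) := by
  obtain ⟨hs1, hs2⟩ := hs
  have hsq : s ^ 2 ≤ 2 := (Real.le_sqrt' (by linarith)).mp hs2
  have hc₂ := tent_tent_half_le_half hs1.le
  have hπ := half_le_self_div_add_one hs1.le
  have hπc₁ := self_div_add_one_le_tent_half hs1.le
  have hJ₁ : tent s '' Icc (tent s (tent s (1 / 2))) (s / (s + 1)) =
      Icc (s / (s + 1)) (tent s (1 / 2)) := by
    rw [← Icc_union_Icc_eq_Icc hc₂ hπ, image_union,
      image_tent_Icc_of_le_half (by linarith) hc₂ le_rfl,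
      image_tent_Icc_of_half_le (by linarith) le_rfl hπ, tent_self_div_add_one hs1.le]
    exact union_eq_right.mpr
      (Icc_subset_Icc_left (self_div_add_one_le_tent_tent_tent_half hs1.le hsq))
  have hh := strictAnti_tentRenormConj hs1
  refine ⟨(Icc_union_Icc_eq_Icc (hc₂.trans hπ) hπc₁).symm, hJ₁, ?_, tentRenormConj s,
    (continuous_tentRenormConj s).continuousOn, hh.injective.injOn, ?_, fun x hx =>
      tentRenormConj_tent_tent hs1 (hπ.trans (hJ₁ ▸ mem_image_of_mem _ hx).1)⟩
  · rw [image_tent_Icc_of_half_le (by linarith) hπ hπc₁, tent_self_div_add_one hs1.le]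
  · rw [(continuous_tentRenormConj s).continuousOn.image_Icc_of_antitoneOn (hc₂.trans hπ)
      (hh.antitone.antitoneOn _), tentRenormConj_self_div_add_one hs1,
      tentRenormConj_tent_tent_half hs1]
end

section
/- Let f be a unimodal map on [a,b] without homtervals and without attracting periodic orbits, whose boundary fixed point a is repelling, and suppose c₁ = f(c) < b. Then every point x ∈ (a, c₂) (where c₂ = f²(c)) enters the core [c₂, c₁] after finitely many iterations of f. -/
open Set Filter Topology MeasureTheory

noncomputable section

/-- There is an ε-chain (staying in `D`) from `y` to `x`. -/
def ChainFrom (f : ℝ → ℝ) (D : Set ℝ) (ε : ℝ) (y x : ℝ) : Prop :=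
  ∃ n : ℕ, ∃ u : ℕ → ℝ, u 0 = y ∧ u (n + 1) = x ∧ (∀ i ≤ n + 1, u i ∈ D) ∧
    ∀ i ≤ n, |f (u i) - u (i + 1)| < ε

/-- `x` is downstream from `y`. -/
def Downstream (f : ℝ → ℝ) (D : Set ℝ) (y x : ℝ) : Prop :=
  ∀ ε > 0, ChainFrom f D ε y x

def ChainRecurrent (f : ℝ → ℝ) (D : Set ℝ) (x : ℝ) : Prop :=
  Downstream f D x x

def ChainEquiv (f : ℝ → ℝ) (D : Set ℝ) (x y : ℝ) : Prop :=
  ChainRecurrent f D x ∧ ChainRecurrent f D y ∧ Downstream f D x y ∧ Downstream f D y x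

/-- A node: an equivalence class of the chain-recurrence relation. -/
def IsNode (f : ℝ → ℝ) (D : Set ℝ) (N : Set ℝ) : Prop :=
  ∃ x, ChainRecurrent f D x ∧ N = {y | ChainEquiv f D x y}

def omegaSet (f : ℝ → ℝ) (x : ℝ) : Set ℝ :=
  omegaLimit atTop (fun (n : ℕ) (y : ℝ) => f^[n] y) {x}

def Basin (f : ℝ → ℝ) (D : Set ℝ) (A : Set ℝ) : Set ℝ :=
  {x ∈ D | omegaSet f x ⊆ A}

/-- A Milnor attractor. -/
def IsMilnorAttractor (f : ℝ → ℝ) (D : Set ℝ) (A : Set ℝ) : Prop :=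
  IsClosed A ∧ A.Nonempty ∧ A ⊆ D ∧ MapsTo f A A ∧ 0 < volume (Basin f D A) ∧
    ∀ A' : Set ℝ, A' ⊂ A → IsClosed A' → MapsTo f A' A' →
      0 < volume (Basin f D A \ Basin f D A')

def IsRepellingNode (f : ℝ → ℝ) (D : Set ℝ) (N : Set ℝ) : Prop :=
  IsNode f D N ∧ ¬ ∃ A, A ⊆ N ∧ IsMilnorAttractor f D A

/-- A unimodal map on `[a,b]` with turning point `c`. -/
def IsUnimodal (f : ℝ → ℝ) (a b c : ℝ) : Prop :=
  a < c ∧ c < b ∧ ContinuousOn f (Icc a b) ∧ MapsTo f (Icc a b) (Icc a b) ∧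
    ((f a = a ∧ f b = a) ∨ (f a = b ∧ f b = b)) ∧
    ((StrictMonoOn f (Icc a c) ∧ StrictAntiOn f (Icc c b)) ∨
      (StrictAntiOn f (Icc a c) ∧ StrictMonoOn f (Icc c b)))

def IsWanderingInterval (f : ℝ → ℝ) (a b u v : ℝ) : Prop :=
  a ≤ u ∧ u < v ∧ v ≤ b ∧
    (∀ i j : ℕ, i < j → f^[i] '' Icc u v ∩ f^[j] '' Icc u v = ∅) ∧
    ¬ ∃ p : ℝ, ∃ k : ℕ, 0 < k ∧ f^[k] p = p ∧
        ∀ x ∈ Icc u v, omegaSet f x ⊆ {y | ∃ i : ℕ, f^[i] p = y}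

def HasAttractingCycle (f : ℝ → ℝ) (D : Set ℝ) : Prop :=
  ∃ p ∈ D, ∃ k : ℕ, 0 < k ∧ f^[k] p = p ∧
    ∃ U ∈ 𝓝 p, ∀ x ∈ U ∩ D, Tendsto (fun n => (f^[k])^[n] x) atTop (𝓝 p)

/-- A T-unimodal map: unimodal, no wandering intervals, no attracting cycles,
finitely many nodes. -/
def IsTUnimodal (f : ℝ → ℝ) (a b c : ℝ) : Prop :=
  IsUnimodal f a b c ∧ (¬ ∃ u v, IsWanderingInterval f a b u v) ∧
    ¬ HasAttractingCycle f (Icc a b) ∧ {N | IsNode f (Icc a b) N}.Finite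

/-- For a unimodal map with repelling fixed endpoint `a`, no homtervals and no
attracting cycles, every point of `(a, c₂)` enters the core `[c₂, c₁]` after
finitely many iterations. -/
theorem stmt9 (f : ℝ → ℝ) (a b c : ℝ) (hf : IsUnimodal f a b c)
    (hmax : StrictMonoOn f (Icc a c))
    (hfa : f a = a ∧ f b = a)
    (hnohom : ∀ u v : ℝ, a ≤ u → u < v → v ≤ b →
      ∃ k : ℕ, c ∈ interior (f^[k] '' Icc u v))
    (hac : ¬ HasAttractingCycle f (Icc a b))
    (harep : ∃ ε > 0, ∀ x ∈ Ioc a (a + ε), f x > x)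
    (hc1 : f c < b) :
    ∀ x ∈ Ioo a (f (f c)), ∃ k : ℕ, f^[k] x ∈ Icc (f (f c)) (f c) := by
  obtain ⟨haclt, hcb, hcont, hmaps, _, hmono⟩ := hf
  have hanti : StrictAntiOn f (Icc c b) := by
    rcases hmono with ⟨_, h⟩ | ⟨h, _⟩
    · exact h
    · exfalso
      have h1 := hmax (left_mem_Icc.mpr haclt.le) (right_mem_Icc.mpr haclt.le) haclt
      have h2 := h (left_mem_Icc.mpr haclt.le) (right_mem_Icc.mpr haclt.le) haclt
      linarith
  have hab : a < b := haclt.trans hcb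
  have hcmem : c ∈ Icc a b := ⟨haclt.le, hcb.le⟩
  have hc1mem : f c ∈ Icc a b := hmaps hcmem
  -- no fixed point in (a, c]
  have hnofix : ∀ p ∈ Ioc a c, f p ≠ p := by
    intro p hp hfp
    have hMT : MapsTo f (Icc a p) (Icc a p) := by
      intro y hy
      have hy' : y ∈ Icc a c := ⟨hy.1, hy.2.trans hp.2⟩
      constructor
      · rw [← hfa.1]
        rcases eq_or_lt_of_le hy.1 with h | h
        · rw [← h]
        · exact (hmax (left_mem_Icc.mpr haclt.le) hy' h).le
      · rw [← hfp]
        rcases eq_or_lt_of_le hy.2 with h | h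
        · rw [h]
        · exact (hmax hy' ⟨hp.1.le, hp.2⟩ h).le
    obtain ⟨k, hk⟩ := hnohom a p le_rfl hp.1 (hp.2.trans hcb.le)
    have hsub : interior (f^[k] '' Icc a p) ⊆ Ioo a p := by
      have := interior_mono ((hMT.iterate k).image_subset)
      rwa [interior_Icc] at this
    exact absurd (hsub hk).2 (not_lt.mpr hp.2)
  -- f y > y on (a, c]
  have hgt : ∀ y ∈ Ioc a c, y < f y := by
    intro y hy
    by_contra hle
    push_neg at hle
    rcases eq_or_lt_of_le hle with heq | hlt
    · exact hnofix y hy heq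
    · obtain ⟨ε, hε, hrep⟩ := harep
      set z := min (a + ε) ((a + y) / 2) with hz
      have hza : a < z := lt_min (by linarith) (by linarith [hy.1])
      have hzy : z < y := (min_le_right _ _).trans_lt (by linarith [hy.1])
      have hfz : z < f z := hrep z ⟨hza, min_le_left _ _⟩
      have hsub : Icc z y ⊆ Icc a b := Icc_subset_Icc hza.le (hy.2.trans hcb.le)
      have hcont' : ContinuousOn (fun t => f t - t) (Icc z y) :=
        (hcont.mono hsub).sub continuousOn_id
      have h0 : (0:ℝ) ∈ Icc (f y - y) (f z - z) := ⟨by linarith, by linarith⟩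
      obtain ⟨p, hp, hp0⟩ := intermediate_value_Icc' hzy.le hcont' h0
      have hp0' : f p - p = 0 := hp0
      exact hnofix p ⟨hza.trans_le hp.1, hp.2.trans hy.2⟩ (by linarith)
  have hcc1 : c < f c := hgt c ⟨haclt, le_rfl⟩
  have hc1b : f c ≤ b := hc1mem.2
  have hc1memcb : f c ∈ Icc c b := ⟨hcc1.le, hc1b⟩
  -- c₂ < c
  have hc2 : f (f c) < c := by
    by_contra hle
    push_neg at hle
    have hMT : MapsTo f (Icc c (f c)) (Icc c (f c)) := by
      intro y hy
      have hy' : y ∈ Icc c b := ⟨hy.1, hy.2.trans hc1b⟩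
      constructor
      · refine hle.trans ?_
        rcases eq_or_lt_of_le hy.2 with h | h
        · rw [h]
        · exact (hanti hy' hc1memcb h).le
      · rcases eq_or_lt_of_le hy.1 with h | h
        · rw [← h]
        · exact (hanti (left_mem_Icc.mpr hcb.le) hy' h).le
    obtain ⟨k, hk⟩ := hnohom c (f c) haclt.le hcc1 hc1b
    have hsub : interior (f^[k] '' Icc c (f c)) ⊆ Ioo c (f c) := by
      have := interior_mono ((hMT.iterate k).image_subset)
      rwa [interior_Icc] at this
    exact lt_irrefl c (hsub hk).1
  -- main argument
  intro x hx
  by_contra hcontra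
  push_neg at hcontra
  have horb : ∀ k, f^[k] x ∈ Ioo a (f (f c)) := by
    intro k
    induction k with
    | zero => simpa using hx
    | succ k ih =>
      rw [Function.iterate_succ_apply']
      set y := f^[k] x with hy
      have hyc : y < c := ih.2.trans hc2
      have hy1 : y < f y := hgt y ⟨ih.1, hyc.le⟩
      have hfyc1 : f y < f c := hmax ⟨ih.1.le, hyc.le⟩ ⟨haclt.le, le_rfl⟩ hyc
      constructor
      · exact ih.1.trans hy1
      · by_contra hge
        push_neg at hge
        exact hcontra (k + 1)
          (by rw [Function.iterate_succ_apply']; exact ⟨hge, hfyc1.le⟩)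
  have hmono' : StrictMono fun k => f^[k] x := strictMono_nat_of_lt_succ (fun k => by
    rw [Function.iterate_succ_apply']
    exact hgt _ ⟨(horb k).1, ((horb k).2.trans hc2).le⟩)
  have hbdd : BddAbove (Set.range fun k => f^[k] x) :=
    ⟨f (f c), by rintro _ ⟨k, rfl⟩; exact (horb k).2.le⟩
  set L := ⨆ k, f^[k] x with hL
  have htend : Tendsto (fun k => f^[k] x) atTop (𝓝 L) :=
    tendsto_atTop_ciSup hmono'.monotone hbdd
  have hLa : a < L := by
    have h0 : (fun k => f^[k] x) 0 ≤ L := le_ciSup hbdd 0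
    simpa using lt_of_lt_of_le hx.1 h0
  have hLc2 : L ≤ f (f c) := ciSup_le fun k => (horb k).2.le
  have hLmem : L ∈ Ioo a b := ⟨hLa, lt_of_le_of_lt hLc2 (hc2.trans hcb)⟩
  have hcontL : ContinuousAt f L := hcont.continuousAt (Icc_mem_nhds hLmem.1 hLmem.2)
  have htend2 : Tendsto (fun k => f (f^[k] x)) atTop (𝓝 (f L)) :=
    hcontL.tendsto.comp htend
  have htend3 : Tendsto (fun k => f (f^[k] x)) atTop (𝓝 L) := by
    have heq : (fun k : ℕ => f (f^[k] x)) = (fun k : ℕ => f^[k + 1] x) := by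
      funext k; rw [Function.iterate_succ_apply']
    rw [heq]
    exact htend.comp (tendsto_add_atTop_nat 1)
  exact hnofix L ⟨hLa, hLc2.trans hc2.le⟩ (tendsto_nhds_unique htend2 htend3)
end
end

section
/- Let f be a T-unimodal map (continuous unimodal with no wandering intervals, no attracting cycles, and finitely many chain-recurrent classes) and let N, M be two distinct repelling nodes with maxima n = max f|_N and m = max f|_M. Then n ≠ m, and the intervals J₁(N) = {x : f(x) ≥ n} and J₁(M) = {x : f(x) ≥ m} are nested: one is contained in the other. Consequently, the repelling nodes of f carry a natural linear order defined by M > N iff J₁(M) ⊃ J₁(N). -/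
open Set Filter Topology MeasureTheory

noncomputable section

namespace Stmt12Aux

variable {f : ℝ → ℝ} {D : Set ℝ} {x x' y z : ℝ}

lemma mem_of_chainRecurrent (h : ChainRecurrent f D x) : x ∈ D := by
  obtain ⟨n, u, h0, h1, hmem, _⟩ := h 1 one_pos
  have := hmem 0 (Nat.zero_le _)
  rwa [h0] at this

lemma downstream_trans (hxy : Downstream f D x y) (hyz : Downstream f D y z) :
    Downstream f D x z := by
  intro ε hε
  obtain ⟨n1, u, hu0, hu1, humem, hustep⟩ := hxy ε hε
  obtain ⟨n2, v, hv0, hv1, hvmem, hvstep⟩ := hyz ε hε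
  refine ⟨n1 + 1 + n2, fun i => if i ≤ n1 then u i else v (i - (n1 + 1)), ?_, ?_, ?_, ?_⟩
  · simpa using hu0
  · have h : ¬ (n1 + 1 + n2 + 1 ≤ n1) := by omega
    simp only [h, if_neg, if_false]
    have : n1 + 1 + n2 + 1 - (n1 + 1) = n2 + 1 := by omega
    rw [this, hv1]
  · intro i hi
    by_cases h : i ≤ n1
    · simpa [h] using humem i (by omega)
    · simp only [h, if_false]
      exact hvmem _ (by omega)
  · intro i hi
    by_cases h : i < n1
    · have h1 : i ≤ n1 := by omega
      have h2 : i + 1 ≤ n1 := by omega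
      simpa [h1, h2] using hustep i (by omega)
    · by_cases h' : i = n1
      · subst h'
        have h2 : ¬ (i + 1 ≤ i) := by omega
        have : i + 1 - (i + 1) = 0 := by omega
        simp only [le_refl, if_true, h2, if_false, this, hv0, ← hu1]
        exact hustep i le_rfl
      · have h1 : ¬ (i ≤ n1) := by omega
        have h2 : ¬ (i + 1 ≤ n1) := by omega
        simp only [h1, h2, if_false]
        have e : i + 1 - (n1 + 1) = i - (n1 + 1) + 1 := by omega
        rw [e]
        exact hvstep _ (by omega)

lemma downstream_step (hx : x ∈ D) (hfx : f x ∈ D) : Downstream f D x (f x) := by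
  intro ε hε
  refine ⟨0, fun i => if i = 0 then x else f x, by simp, by simp, ?_, ?_⟩
  · intro i hi
    by_cases h : i = 0 <;> simp [h, hx, hfx]
  · intro i hi
    have : i = 0 := by omega
    subst this
    simpa using hε

lemma uniform_cont (hD : IsCompact D) (hc : ContinuousOn f D) {ε : ℝ} (hε : 0 < ε) :
    ∃ δ > 0, ∀ z ∈ D, ∀ w ∈ D, |z - w| < δ → |f z - f w| < ε := by
  have h := (Metric.uniformContinuousOn_iff.mp (hD.uniformContinuousOn_of_continuous hc)) ε hε
  obtain ⟨δ, hδ, h⟩ := h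
  exact ⟨δ, hδ, fun z hz w hw hd => by
    have := h z hz w hw (by rwa [Real.dist_eq]); rwa [Real.dist_eq] at this⟩

lemma downstream_shift (hD : IsCompact D) (hc : ContinuousOn f D) (hmaps : Set.MapsTo f D D)
    (hx : ChainRecurrent f D x) : Downstream f D (f x) x := by
  intro ε hε
  obtain ⟨δ, hδ, hδ'⟩ := uniform_cont hD hc (half_pos hε)
  set ε' := min (ε / 2) δ with hε'def
  have hε'pos : 0 < ε' := lt_min (half_pos hε) hδ
  obtain ⟨n, v, hv0, hv1, hvmem, hvstep⟩ := hx ε' hε'pos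
  have hxD : x ∈ D := by rw [← hv0]; exact hvmem 0 (Nat.zero_le _)
  have hfxD : f x ∈ D := hmaps hxD
  rcases Nat.eq_zero_or_pos n with hn | hn
  · subst hn
    -- chain (f x, x)
    have hstep0 : |f x - x| < ε' := by
      have := hvstep 0 le_rfl
      rwa [hv0, hv1] at this
    refine ⟨0, fun i => if i = 0 then f x else x, by simp, by simp, ?_, ?_⟩
    · intro i hi; by_cases h : i = 0 <;> simp [h, hxD, hfxD]
    · intro i hi
      have : i = 0 := by omega
      subst this
      simp only [if_pos rfl, if_neg one_ne_zero]
      have h1 : |f (f x) - f x| < ε / 2 :=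
        hδ' _ hfxD _ hxD (lt_of_lt_of_le hstep0 (min_le_right _ _))
      calc |f (f x) - x| ≤ |f (f x) - f x| + |f x - x| := abs_sub_le _ _ _
        _ < ε / 2 + ε / 2 := by
            have := lt_of_lt_of_le hstep0 (min_le_left _ _)
            linarith
        _ = ε := by ring
  · -- chain w of length n - 1 : w 0 = f x, w i = v (i+1) for i ≥ 1
    obtain ⟨m, rfl⟩ : ∃ m, n = m + 1 := ⟨n - 1, by omega⟩
    refine ⟨m, fun i => if i = 0 then f x else v (i + 1), by simp, ?_, ?_, ?_⟩
    · simp only [Nat.succ_ne_zero, if_false]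
      exact hv1
    · intro i hi
      by_cases h : i = 0
      · simp [h, hfxD]
      · simp only [h, if_false]
        exact hvmem _ (by omega)
    · intro i hi
      by_cases h : i = 0
      · subst h
        simp only [if_pos rfl, if_neg one_ne_zero]
        have h01 : |f x - v 1| < ε' := by
          have := hvstep 0 (by omega)
          rwa [hv0] at this
        have h1 : |f (f x) - f (v 1)| < ε / 2 :=
          hδ' _ hfxD _ (hvmem 1 (by omega)) (lt_of_lt_of_le h01 (min_le_right _ _))
        have h2 : |f (v 1) - v 2| < ε' := hvstep 1 (by omega)
        calc |f (f x) - v 2| ≤ |f (f x) - f (v 1)| + |f (v 1) - v 2| := abs_sub_le _ _ _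
          _ < ε / 2 + ε / 2 := by
              have := lt_of_lt_of_le h2 (min_le_left _ _)
              linarith
          _ = ε := by ring
      · simp only [h, if_false, Nat.succ_ne_zero]
        have := hvstep (i + 1) (by omega)
        exact lt_of_lt_of_le this (le_trans (min_le_left _ _) (by linarith))

lemma class_closed (hD : IsClosed D) (hc : ContinuousOn f D)
    (hx : ChainRecurrent f D x) : IsClosed {y | ChainEquiv f D x y} := by
  rw [← isSeqClosed_iff_isClosed]
  intro w p hw hlim
  have hwD : ∀ k, w k ∈ D := fun k => mem_of_chainRecurrent (hw k).2.1
  have hpD : p ∈ D := hD.mem_of_tendsto hlim (Eventually.of_forall hwD)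
  have hcp : ContinuousWithinAt f D p := hc p hpD
  -- Downstream x p
  have hxp : Downstream f D x p := by
    intro ε hε
    obtain ⟨k, hk⟩ := (Metric.tendsto_atTop.mp hlim (ε / 2) (half_pos hε)) 
    have hclose : |w k - p| < ε / 2 := by
      have := hk k le_rfl; rwa [Real.dist_eq] at this
    obtain ⟨n, u, hu0, hu1, humem, hustep⟩ := (hw k).2.2.1 (ε / 2) (half_pos hε)
    refine ⟨n, fun i => if i = n + 1 then p else u i, ?_, by simp, ?_, ?_⟩
    · simp only [Nat.succ_ne_zero, if_neg (by omega : ¬ (0 = n + 1))]; exact hu0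
    · intro i hi
      by_cases h : i = n + 1
      · simp [h, hpD]
      · simp only [h, if_false]; exact humem i hi
    · intro i hi
      by_cases h : i = n
      · subst h
        simp only [if_pos rfl, if_neg (by omega : ¬ (i = i + 1))]
        calc |f (u i) - p| ≤ |f (u i) - u (i + 1)| + |u (i + 1) - p| := abs_sub_le _ _ _
          _ < ε / 2 + ε / 2 := by
              have := hustep i le_rfl
              rw [hu1] at *
              linarith [hustep i le_rfl]
          _ = ε := by ring
      · simp only [if_neg (by omega : ¬ (i = n + 1)), if_neg (by omega : ¬ (i + 1 = n + 1))]
        exact lt_of_lt_of_le (hustep i hi) (by linarith)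
  -- Downstream p x
  have hpx : Downstream f D p x := by
    intro ε hε
    obtain ⟨δ, hδpos, hδ⟩ := Metric.continuousWithinAt_iff.mp hcp (ε / 2) (half_pos hε)
    obtain ⟨k, hk⟩ := (Metric.tendsto_atTop.mp hlim δ hδpos)
    have hclose : dist (w k) p < δ := hk k le_rfl
    have hfclose : |f (w k) - f p| < ε / 2 := by
      have := hδ (hwD k) hclose
      rwa [Real.dist_eq] at this
    obtain ⟨n, u, hu0, hu1, humem, hustep⟩ := (hw k).2.2.2 (ε / 2) (half_pos hε)
    refine ⟨n, fun i => if i = 0 then p else u i, by simp, ?_, ?_, ?_⟩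
    · simp only [if_neg (Nat.succ_ne_zero n)]; exact hu1
    · intro i hi
      by_cases h : i = 0
      · simp [h, hpD]
      · simp only [h, if_false]; exact humem i hi
    · intro i hi
      by_cases h : i = 0
      · subst h
        simp only [if_pos rfl, if_neg (Nat.one_ne_zero)]
        calc |f p - u 1| ≤ |f p - f (w k)| + |f (w k) - u 1| := abs_sub_le _ _ _
          _ < ε / 2 + ε / 2 := by
              rw [abs_sub_comm] at hfclose
              have := hustep 0 (Nat.zero_le _)
              rw [hu0] at this
              linarith
          _ = ε := by ring
      · simp only [h, if_false, if_neg (Nat.succ_ne_zero i)]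
        exact lt_of_lt_of_le (hustep i hi) (by linarith)
  exact ⟨hx, downstream_trans hpx hxp, hxp, hpx⟩

lemma chainEquiv_symm (h : ChainEquiv f D x y) : ChainEquiv f D y x :=
  ⟨h.2.1, h.1, h.2.2.2, h.2.2.1⟩

lemma chainEquiv_trans (h1 : ChainEquiv f D x y) (h2 : ChainEquiv f D y z) :
    ChainEquiv f D x z :=
  ⟨h1.1, h2.2.1, downstream_trans h1.2.2.1 h2.2.2.1, downstream_trans h2.2.2.2 h1.2.2.2⟩

lemma class_invariant (hD : IsCompact D) (hc : ContinuousOn f D) (hmaps : Set.MapsTo f D D)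
    (hy : ChainEquiv f D x y) : ChainEquiv f D x (f y) := by
  have hyrec : ChainRecurrent f D y := hy.2.1
  have hyD : y ∈ D := mem_of_chainRecurrent hyrec
  have hfyD : f y ∈ D := hmaps hyD
  have hshift : Downstream f D (f y) y := downstream_shift hD hc hmaps hyrec
  have hstep : Downstream f D y (f y) := downstream_step hyD hfyD
  exact ⟨hy.1, downstream_trans hshift hstep, downstream_trans hy.2.2.1 hstep,
    downstream_trans hshift hy.2.2.2⟩

theorem main_neq (f : ℝ → ℝ) (a b : ℝ) (hc : ContinuousOn f (Icc a b))
    (hmaps : Set.MapsTo f (Icc a b) (Icc a b))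
    (N M : Set ℝ) (hN : IsNode f (Icc a b) N) (hM : IsNode f (Icc a b) M)
    (hNM : N ≠ M) : sSup (f '' N) ≠ sSup (f '' M) := by
  obtain ⟨x0, hx0, rfl⟩ := hN
  obtain ⟨x1, hx1, rfl⟩ := hM
  have key : ∀ x : ℝ, ChainRecurrent f (Icc a b) x →
      sSup (f '' {y | ChainEquiv f (Icc a b) x y}) ∈ {y | ChainEquiv f (Icc a b) x y} := by
    intro x hx
    set S := {y | ChainEquiv f (Icc a b) x y} with hS
    have hSne : S.Nonempty := ⟨x, ⟨hx, hx, hx, hx⟩⟩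
    have hSsub : S ⊆ Icc a b := fun y hy => mem_of_chainRecurrent hy.2.1
    have hSclosed : IsClosed S := class_closed isClosed_Icc hc hx
    have hScompact : IsCompact S := isCompact_Icc.of_isClosed_subset hSclosed hSsub
    have himg : IsCompact (f '' S) := hScompact.image_of_continuousOn (hc.mono hSsub)
    have hmem : sSup (f '' S) ∈ f '' S := himg.sSup_mem (hSne.image f)
    obtain ⟨y, hyS, hyeq⟩ := hmem
    rw [← hyeq]
    exact class_invariant isCompact_Icc hc hmaps hyS
  intro heq
  have h1 := key x0 hx0
  have h2 := key x1 hx1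
  rw [heq] at h1
  -- sSup (f '' M-class) is in both classes
  have hequiv : ChainEquiv f (Icc a b) x0 x1 :=
    chainEquiv_trans h1 (chainEquiv_symm h2)
  apply hNM
  ext y
  exact ⟨fun h => chainEquiv_trans (chainEquiv_symm hequiv) h,
    fun h => chainEquiv_trans hequiv h⟩

end Stmt12Aux

/-- Distinct repelling nodes of a T-unimodal map have distinct maxima, and their
associated intervals `J₁(N) = {x : f x ≥ max f|_N}` are nested; hence the repelling
nodes are linearly ordered. -/
theorem stmt12 (f : ℝ → ℝ) (a b c : ℝ) (hf : IsTUnimodal f a b c)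
    (hmax : StrictMonoOn f (Icc a c))
    (N M : Set ℝ)
    (hN : IsRepellingNode f (Icc a b) N) (hM : IsRepellingNode f (Icc a b) M)
    (hNM : N ≠ M) :
    sSup (f '' N) ≠ sSup (f '' M) ∧
    ({x ∈ Icc a b | sSup (f '' N) ≤ f x} ⊆ {x ∈ Icc a b | sSup (f '' M) ≤ f x} ∨
      {x ∈ Icc a b | sSup (f '' M) ≤ f x} ⊆ {x ∈ Icc a b | sSup (f '' N) ≤ f x}) := by
  constructor
  · exact Stmt12Aux.main_neq f a b hf.1.2.2.1 hf.1.2.2.2.1 N M hN.1 hM.1 hNM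
  · rcases le_total (sSup (f '' N)) (sSup (f '' M)) with h | h
    · exact Or.inr (fun x hx => ⟨hx.1, h.trans hx.2⟩)
    · exact Or.inl (fun x hx => ⟨hx.1, h.trans hx.2⟩)
end
end

section
/- Let f be a T-unimodal map and N a repelling node, with p₀ ∈ N an endpoint of J₁(N) = {x : f(x) ≥ max f|_N}. If there exists r ≥ 1 with f^r(J₁(N)) ⊂ J₁(N) and no preimage of N lies in the interior of J₁(N), then one of the two endpoints of J₁(N) is a periodic point of f. -/
open Set Filter Topology MeasureTheory

noncomputable section

/-- Concatenation of chains. -/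
lemma chainFrom_trans {f : ℝ → ℝ} {D : Set ℝ} {ε : ℝ} {x y z : ℝ}
    (h1 : ChainFrom f D ε x y) (h2 : ChainFrom f D ε y z) :
    ChainFrom f D ε x z := by
  obtain ⟨n, u, hu0, hun, huD, hus⟩ := h1
  obtain ⟨m, v, hv0, hvm, hvD, hvs⟩ := h2
  refine ⟨n + 1 + m, fun i => if i ≤ n + 1 then u i else v (i - (n + 1)), by simp [hu0],
    ?_, ?_, ?_⟩
  · have h : ¬ (n + 1 + m + 1 ≤ n + 1) := by omega
    simp only [h, if_false]
    rw [show n + 1 + m + 1 - (n + 1) = m + 1 by omega]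
    exact hvm
  · intro i hi
    by_cases h : i ≤ n + 1
    · simp only [h, if_true]; exact huD i h
    · simp only [h, if_false]
      exact hvD _ (by omega)
  · intro i hi
    by_cases h1 : i + 1 ≤ n + 1
    · simp only [h1, if_true, show i ≤ n + 1 by omega, if_true]
      exact hus i (by omega)
    · by_cases h2 : i ≤ n + 1
      · have hieq : i = n + 1 := by omega
        simp only [h1, if_false, h2, if_true, hieq, hun]
        rw [if_pos (le_refl _), if_neg (by omega), show n + 1 + 1 - (n + 1) = 1 by omega, ← hv0]
        exact hvs 0 (by omega)
      · simp only [h1, if_false, h2, if_false]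
        rw [show i + 1 - (n + 1) = (i - (n + 1)) + 1 by omega]
        exact hvs _ (by omega)

lemma downstream_trans {f : ℝ → ℝ} {D : Set ℝ} {x y z : ℝ}
    (h1 : Downstream f D x y) (h2 : Downstream f D y z) : Downstream f D x z :=
  fun ε hε => chainFrom_trans (h1 ε hε) (h2 ε hε)

lemma downstream_step {f : ℝ → ℝ} {D : Set ℝ} {x : ℝ} (hx : x ∈ D) (hfx : f x ∈ D) :
    Downstream f D x (f x) := by
  intro ε hε
  refine ⟨0, fun i => if i = 0 then x else f x, by simp, by simp, ?_, ?_⟩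
  · intro i hi
    by_cases h : i = 0 <;> simp [h, hx, hfx]
  · intro i hi
    interval_cases i
    simpa using hε

/-- Shifting a chain: from a fine chain `x → z` of length ≥ 1 we get a chain `f x → z`. -/
lemma chain_shift {f : ℝ → ℝ} {D : Set ℝ} {ε δ : ℝ} (hεpos : 0 < ε) (hδε : δ ≤ ε / 2)
    (hδ : ∀ s ∈ D, ∀ t ∈ D, |s - t| < δ → |f s - f t| < ε / 2)
    {x z : ℝ} (hfx : f x ∈ D)
    {n : ℕ} (hn : 1 ≤ n) {u : ℕ → ℝ} (hu0 : u 0 = x) (hun : u (n + 1) = z)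
    (huD : ∀ i ≤ n + 1, u i ∈ D) (hus : ∀ i ≤ n, |f (u i) - u (i + 1)| < δ) :
    ChainFrom f D ε (f x) z := by
  refine ⟨n - 1, fun i => if i = 0 then f x else u (i + 1), by simp, ?_, ?_, ?_⟩
  · rw [show n - 1 + 1 = n by omega]
    simp only [show ¬ (n = 0) by omega, if_false]
    exact hun
  · intro i hi
    by_cases h : i = 0
    · simp [h, hfx]
    · simp only [h, if_false]
      exact huD _ (by omega)
  · intro i hi
    by_cases h : i = 0
    · subst h
      simp only [if_true, show ¬ (0 + 1 = 0) by omega, if_false]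
      have h1 : |f x - u 1| < δ := by
        have := hus 0 (by omega); rwa [hu0] at this
      have h2 : |f (f x) - f (u 1)| < ε / 2 :=
        hδ _ hfx _ (huD 1 (by omega)) h1
      have h3 : |f (u 1) - u 2| < δ := hus 1 (by omega)
      calc |f (f x) - u (1 + 1)| ≤ |f (f x) - f (u 1)| + |f (u 1) - u 2| := by
              rw [show (1:ℕ) + 1 = 2 from rfl]; exact abs_sub_le _ _ _
        _ < ε / 2 + δ := by linarith
        _ ≤ ε := by linarith
    · simp only [h, if_false, show ¬ (i + 1 = 0) by omega, if_false]
      have := hus (i + 1) (by omega)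
      calc |f (u (i + 1)) - u (i + 1 + 1)| < δ := this
        _ ≤ ε := by linarith

lemma mem_D_of_chainRecurrent {f : ℝ → ℝ} {D : Set ℝ} {x : ℝ}
    (h : ChainRecurrent f D x) : x ∈ D := by
  obtain ⟨n, u, hu0, -, huD, -⟩ := h 1 one_pos
  rw [← hu0]; exact huD 0 (by omega)

section NodeInvariance

variable {f : ℝ → ℝ} {a b : ℝ}

/-- Uniform-continuity modulus on `[a,b]`. -/
lemma unif_modulus (hc : ContinuousOn f (Icc a b)) {ε : ℝ} (hε : 0 < ε) :
    ∃ δ > 0, δ ≤ ε / 2 ∧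
      ∀ s ∈ Icc a b, ∀ t ∈ Icc a b, |s - t| < δ → |f s - f t| < ε / 2 := by
  have huc : UniformContinuousOn f (Icc a b) :=
    isCompact_Icc.uniformContinuousOn_of_continuous hc
  rw [Metric.uniformContinuousOn_iff] at huc
  obtain ⟨δ, hδpos, hδ⟩ := huc (ε / 2) (by linarith)
  refine ⟨min δ (ε / 2), lt_min hδpos (by linarith), min_le_right _ _, ?_⟩
  intro s hs t ht hst
  have := hδ s hs t ht (by rw [Real.dist_eq]; exact lt_of_lt_of_le hst (min_le_left _ _))
  rwa [Real.dist_eq] at this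

lemma downstream_shift (hc : ContinuousOn f (Icc a b)) {x z : ℝ}
    (hfx : f x ∈ Icc a b) (hz : ChainRecurrent f (Icc a b) z)
    (hxz : Downstream f (Icc a b) x z) :
    Downstream f (Icc a b) (f x) z := by
  intro ε hε
  obtain ⟨δ, hδpos, hδε, hδ⟩ := unif_modulus hc hε
  -- a δ-chain x → z of length ≥ 1, by concatenating with a loop at z
  obtain ⟨n, u, hu0, hun, huD, hus⟩ := chainFrom_trans (hxz δ hδpos) (hz δ hδpos)
  obtain (hn | hn) := Nat.eq_zero_or_pos n
  ·
    subst hn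
    -- chain of length 0: |f x - z| < δ; extend with a loop at z to get length ≥ 1
    obtain ⟨m, v, hv0, hvm, hvD, hvs⟩ := hz δ hδpos
    have hxz' : |f x - z| < δ := by
      have := hus 0 (by omega)
      rwa [hu0, hun] at this
    refine chain_shift hε hδε hδ hfx (show 1 ≤ m + 1 by omega)
      (u := fun i => if i = 0 then x else v (i - 1)) (by simp) ?_ ?_ ?_
    · simp only [show ¬ (m + 1 + 1 = 0) by omega, if_false]
      rw [show m + 1 + 1 - 1 = m + 1 by omega]
      exact hvm
    · intro i hi
      by_cases h : i = 0
      · simp only [h, if_true]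
        rw [← hu0]; exact huD 0 (by omega)
      · simp only [h, if_false]
        exact hvD _ (by omega)
    · intro i hi
      by_cases h : i = 0
      · simp only [h, if_true, show ¬ (0 + 1 = 0) by omega, if_false]
        rw [show (0:ℕ) + 1 - 1 = 0 by omega, hv0]
        exact hxz'
      · simp only [h, if_false, show ¬ (i + 1 = 0) by omega, if_false]
        rw [show i + 1 - 1 = (i - 1) + 1 by omega]
        exact hvs _ (by omega)
  · exact chain_shift hε hδε hδ hfx hn hu0 hun huD hus

/-- A node is forward invariant. -/
lemma node_forward (hc : ContinuousOn f (Icc a b)) (hm : MapsTo f (Icc a b) (Icc a b))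
    {N : Set ℝ} (hN : IsNode f (Icc a b) N) {x : ℝ} (hx : x ∈ N) : f x ∈ N := by
  obtain ⟨x₀, hrec0, rfl⟩ := hN
  obtain ⟨h0, hxr, hdown, hup⟩ := hx
  have hxD : x ∈ Icc a b := mem_D_of_chainRecurrent hxr
  have hfxD : f x ∈ Icc a b := hm hxD
  have hstep : Downstream f (Icc a b) x (f x) := downstream_step hxD hfxD
  have hfx_x : Downstream f (Icc a b) (f x) x := downstream_shift hc hfxD hxr hxr
  refine ⟨h0, downstream_trans hfx_x hstep, downstream_trans hdown hstep,
    downstream_shift hc hfxD h0 hup⟩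

lemma node_iter (hc : ContinuousOn f (Icc a b)) (hm : MapsTo f (Icc a b) (Icc a b))
    {N : Set ℝ} (hN : IsNode f (Icc a b) N) {x : ℝ} (hx : x ∈ N) (k : ℕ) :
    f^[k] x ∈ N := by
  induction k with
  | zero => simpa using hx
  | succ k ih =>
      rw [Function.iterate_succ_apply']
      exact node_forward hc hm hN ih

end NodeInvariance

/-- If `J₁(N) = [p,q]` is mapped into itself by some `f^[r]` and no preimage of the
repelling node `N` lies in its interior, then one of the endpoints `p`, `q` is
periodic. -/
theorem stmt13 (f : ℝ → ℝ) (a b c : ℝ) (hf : IsTUnimodal f a b c)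
    (hmax : StrictMonoOn f (Icc a c))
    (N : Set ℝ) (hN : IsRepellingNode f (Icc a b) N)
    (p q : ℝ) (hpq : p < q)
    (hJ : {x ∈ Icc a b | sSup (f '' N) ≤ f x} = Icc p q)
    (hend : p ∈ N ∨ q ∈ N)
    (r : ℕ) (hr : 1 ≤ r) (hinv : MapsTo (f^[r]) (Icc p q) (Icc p q))
    (hpre : ∀ x ∈ Ioo p q, ∀ k : ℕ, f^[k] x ∉ N) :
    ∃ k : ℕ, 0 < k ∧ (f^[k] p = p ∨ f^[k] q = q) := by
  obtain ⟨hf1, -, -, -⟩ := hf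
  obtain ⟨-, -, hc, hm, -, -⟩ := hf1
  have hNnode : IsNode f (Icc a b) N := hN.1
  have hpIcc : p ∈ Icc p q := ⟨le_refl p, le_of_lt hpq⟩
  have hqIcc : q ∈ Icc p q := ⟨le_of_lt hpq, le_refl q⟩
  -- any point of N inside [p,q] must be an endpoint
  have hkey : ∀ e ∈ N, ∀ _ : e ∈ Icc p q, f^[r] e = p ∨ f^[r] e = q := by
    intro e heN heI
    have h1 : f^[r] e ∈ N := node_iter hc hm hNnode heN r
    have h2 : f^[r] e ∈ Icc p q := hinv heI
    by_contra hcon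
    push_neg at hcon
    have : f^[r] e ∈ Ioo p q :=
      ⟨lt_of_le_of_ne h2.1 (Ne.symm hcon.1), lt_of_le_of_ne h2.2 hcon.2⟩
    exact hpre _ this 0 (by simpa using h1)
  have hr0 : 0 < r := hr
  rcases hend with hpN | hqN
  · rcases hkey p hpN hpIcc with h | h
    · exact ⟨r, hr0, Or.inl h⟩
    · -- f^[r] p = q, so q ∈ N
      have hqN : q ∈ N := h ▸ node_iter hc hm hNnode hpN r
      rcases hkey q hqN hqIcc with h2 | h2
      · refine ⟨r + r, by omega, Or.inl ?_⟩
        rw [Function.iterate_add_apply, h, h2]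
      · exact ⟨r, hr0, Or.inr h2⟩
  · rcases hkey q hqN hqIcc with h | h
    · -- f^[r] q = p, so p ∈ N
      have hpN : p ∈ N := h ▸ node_iter hc hm hNnode hqN r
      rcases hkey p hpN hpIcc with h2 | h2
      · exact ⟨r, hr0, Or.inl h2⟩
      · refine ⟨r + r, by omega, Or.inr ?_⟩
        rw [Function.iterate_add_apply, h, h2]
    · exact ⟨r, hr0, Or.inr h⟩
end
end

section
/- Let f : X → X be a transitive continuous map of a compact metric space with a backward orbit {..., d₋₂, d₋₁, d₀} dense in X, and suppose f is topologically exact. Then every point x ∈ X has a backward orbit dense in X. -/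
open Set Filter Topology

/-- In a transitive, topologically exact compact system possessing a dense backward
orbit, every point has a dense backward orbit. -/
theorem stmt17 {X : Type*} [MetricSpace X] [CompactSpace X]
    (f : X → X) (hf : Continuous f)
    (htrans : ∀ U V : Set X, IsOpen U → IsOpen V → U.Nonempty → V.Nonempty →
      ∃ n : ℕ, (f^[n] '' U ∩ V).Nonempty)
    (d : ℕ → X) (hd : ∀ i, f (d (i + 1)) = d i) (hdense : Dense (Set.range d))
    (hexact : ∀ U : Set X, IsOpen U → U.Nonempty → ∃ n : ℕ, f^[n] '' U = Set.univ) :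
    ∀ x : X, ∃ e : ℕ → X, e 0 = x ∧ (∀ i, f (e (i + 1)) = e i) ∧
      Dense (Set.range e) := by
  intro x
  -- f is surjective
  have hsurj : Function.Surjective f := by
    have hC : IsClosed (Set.range f) := (isCompact_range hf).isClosed
    have hcompl : (Set.range f)ᶜ = ∅ := by
      by_contra h
      have hne : ((Set.range f)ᶜ).Nonempty := Set.nonempty_iff_ne_empty.mpr h
      obtain ⟨n, hn⟩ := hexact _ hC.isOpen_compl hne
      cases n with
      | zero =>
        simp only [Function.iterate_zero, Set.image_id] at hn
        have : f x ∈ (Set.range f)ᶜ := hn ▸ Set.mem_univ _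
        exact this ⟨x, rfl⟩
      | succ m =>
        obtain ⟨y, hy⟩ := hne
        have : y ∈ f^[m+1] '' (Set.range f)ᶜ := hn ▸ Set.mem_univ y
        obtain ⟨z, _, hz⟩ := this
        rw [Function.iterate_succ_apply'] at hz
        exact hy ⟨f^[m] z, hz⟩
    intro y
    have : y ∈ Set.range f := by
      by_contra h
      have : y ∈ (Set.range f)ᶜ := h
      rw [hcompl] at this
      exact this
    exact this
  -- key step: from any point p, we can find a backward segment of positive length
  -- starting in any ball around d k
  have step : ∀ (j : ℕ) (len : ℕ) (g : ℕ → X),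
      ∃ (len' : ℕ) (g' : ℕ → X),
        ((∀ i < len, f (g (i + 1)) = g i) →
          len < len' ∧ (∀ i ≤ len, g' i = g i) ∧
          (∀ i < len', f (g' (i + 1)) = g' i) ∧
          dist (g' len') (d (Nat.unpair j).1) < 1 / ((Nat.unpair j).2 + 1)) := by
    intro j len g
    set k := (Nat.unpair j).1 with hk
    set r : ℝ := 1 / ((Nat.unpair j).2 + 1) with hr
    have hrpos : 0 < r := by positivity
    have hUopen : IsOpen (Metric.ball (d k) r) := Metric.isOpen_ball
    have hUne : (Metric.ball (d k) r).Nonempty := ⟨d k, Metric.mem_ball_self hrpos⟩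
    obtain ⟨n, hn⟩ := hexact _ hUopen hUne
    -- get n' ≥ 1 and q ∈ ball with f^[n'] q = g len
    have key : ∃ (n' : ℕ) (q : X), 1 ≤ n' ∧ q ∈ Metric.ball (d k) r ∧ f^[n'] q = g len := by
      cases n with
      | zero =>
        simp only [Function.iterate_zero, Set.image_id] at hn
        obtain ⟨q, hq⟩ := hsurj (g len)
        exact ⟨1, q, le_refl 1, hn ▸ Set.mem_univ q, by simpa using hq⟩
      | succ m =>
        have : g len ∈ f^[m+1] '' Metric.ball (d k) r := hn ▸ Set.mem_univ _
        obtain ⟨q, hq, hq2⟩ := this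
        exact ⟨m + 1, q, Nat.le_add_left 1 m, hq, hq2⟩
    obtain ⟨n', q, hn1, hqball, hqit⟩ := key
    refine ⟨len + n', fun i => if i ≤ len then g i else f^[len + n' - i] q, fun hchain => ?_⟩
    refine ⟨by omega, fun i hi => by simp [hi], ?_, ?_⟩
    · intro i hi
      by_cases h1 : i + 1 ≤ len
      · simp only [if_pos h1, if_pos (by omega : i ≤ len)]
        exact hchain i (by omega)
      · by_cases h2 : i ≤ len
        · -- i = len
          have hieq : i = len := by omega
          subst hieq
          simp only [if_neg h1, if_pos h2]
          have e1 : i + n' - (i + 1) = n' - 1 := by omega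
          rw [e1, ← Function.iterate_succ_apply' f (n' - 1) q]
          have e2 : n' - 1 + 1 = n' := by omega
          rw [Nat.succ_eq_add_one, e2, hqit]
        · simp only [if_neg h1, if_neg h2]
          rw [← Function.iterate_succ_apply' f (len + n' - (i + 1)) q]
          congr 1
          omega
    · have : ¬ (len + n' ≤ len) := by omega
      simp only [if_neg this]
      have e1 : len + n' - (len + n') = 0 := by omega
      rw [e1]
      simpa using hqball
  choose L Gf hspec using step
  -- recursively build the segments
  set G : ℕ → ℕ × (ℕ → X) :=
    fun j => Nat.rec (motive := fun _ => ℕ × (ℕ → X)) (0, fun _ => x)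
      (fun j prev => (L j prev.1 prev.2, Gf j prev.1 prev.2)) j with hG
  have hG0 : G 0 = (0, fun _ => x) := rfl
  have hGsucc : ∀ j, G (j + 1) = (L j (G j).1 (G j).2, Gf j (G j).1 (G j).2) := fun j => rfl
  -- invariant: each stage is a backward chain
  have hinv : ∀ j, ∀ i < (G j).1, f ((G j).2 (i + 1)) = (G j).2 i := by
    intro j
    induction j with
    | zero => intro i hi; simp [hG0] at hi
    | succ j ih =>
      have h := (hspec j (G j).1 (G j).2 ih).2.2.1
      rw [hGsucc j]
      exact h
  have hstepspec : ∀ j, (G j).1 < (G (j + 1)).1 ∧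
      (∀ i ≤ (G j).1, (G (j + 1)).2 i = (G j).2 i) ∧
      dist ((G (j + 1)).2 (G (j + 1)).1) (d (Nat.unpair j).1) < 1 / ((Nat.unpair j).2 + 1) := by
    intro j
    have h := hspec j (G j).1 (G j).2 (hinv j)
    rw [hGsucc j]
    exact ⟨h.1, h.2.1, h.2.2.2⟩
  -- lengths grow
  have hlen : ∀ j, j ≤ (G j).1 := by
    intro j
    induction j with
    | zero => simp [hG0]
    | succ j ih => have := (hstepspec j).1; omega
  have hlenmono : ∀ j j', j ≤ j' → (G j).1 ≤ (G j').1 := by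
    intro j j' hjj
    induction j' with
    | zero => have h0 : j = 0 := by omega
              subst h0; exact le_refl _
    | succ j' ih =>
      rcases Nat.eq_or_lt_of_le hjj with h | h
      · subst h; exact le_refl _
      · have := (hstepspec j').1
        have := ih (by omega)
        omega
  -- agreement
  have hagree : ∀ j j', j ≤ j' → ∀ i ≤ (G j).1, (G j').2 i = (G j).2 i := by
    intro j j' hjj
    induction j' with
    | zero =>
      have : j = 0 := by omega
      subst this; intro i _; rfl
    | succ j' ih =>
      rcases Nat.eq_or_lt_of_le hjj with h | h
      · subst h; intro i _; rfl
      · intro i hi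
        have hle : (G j).1 ≤ (G j').1 := hlenmono j j' (by omega)
        rw [(hstepspec j').2.1 i (by omega)]
        exact ih (by omega) i hi
  -- the diagonal sequence
  refine ⟨fun i => (G i).2 i, ?_, ?_, ?_⟩
  · simp [hG0]
  · intro i
    have h1 : f ((G (i + 1)).2 (i + 1)) = (G (i + 1)).2 i :=
      hinv (i + 1) i (by have := hlen (i + 1); omega)
    rw [h1]
    exact hagree i (i + 1) (by omega) i (hlen i)
  · rw [Metric.dense_iff]
    intro y ε hε
    obtain ⟨z, hz1, hz2⟩ := Metric.dense_iff.mp hdense y (ε / 2) (by positivity)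
    obtain ⟨k, hk⟩ := hz2
    obtain ⟨m, hm⟩ := exists_nat_one_div_lt (show (0:ℝ) < ε / 2 by positivity)
    set j := Nat.pair k m with hj
    set N := (G (j + 1)).1 with hN
    have hN1 : j + 1 ≤ N := hlen (j + 1)
    have heN : (G N).2 N = (G (j + 1)).2 N :=
      hagree (j + 1) N hN1 N (le_refl N)
    have hdist : dist ((G (j + 1)).2 N) (d k) < 1 / (m + 1) := by
      have := (hstepspec j).2.2
      rwa [hj, Nat.unpair_pair] at this
    refine ⟨(G N).2 N, ?_, ⟨N, rfl⟩⟩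
    rw [Metric.mem_ball]
    have h1 : dist ((G N).2 N) (d k) < ε / 2 := by
      rw [heN]
      calc dist ((G (j + 1)).2 N) (d k) < 1 / (m + 1) := hdist
        _ < ε / 2 := hm
    have h2 : dist (d k) y < ε / 2 := by rw [hk]; exact Metric.mem_ball.mp hz1
    calc dist ((G N).2 N) y ≤ dist ((G N).2 N) (d k) + dist (d k) y := dist_triangle _ _ _
      _ < ε / 2 + ε / 2 := add_lt_add h1 h2
      _ = ε := by ring
end

section
/- Let f be a T-unimodal map on [a,b] with f(a) = f(b) = a and no homtervals, and with c₁ = f(c). Then a point x ∈ [a,b] has a backward orbit under f asymptoting to the fixed endpoint a if and only if x ∈ [a, c₁]. -/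
open Set Filter Topology MeasureTheory

noncomputable section

/-- In a T-unimodal map with `f(a) = f(b) = a` and no homtervals, a point has a
backward orbit asymptoting to the fixed endpoint `a` iff it lies in `[a, c₁]`. -/
theorem stmt18 (f : ℝ → ℝ) (a b c : ℝ) (hf : IsTUnimodal f a b c)
    (hmax : StrictMonoOn f (Icc a c))
    (hfa : f a = a ∧ f b = a)
    (hnohom : ∀ u v : ℝ, a ≤ u → u < v → v ≤ b →
      ∃ k : ℕ, c ∈ interior (f^[k] '' Icc u v)) :
    ∀ x ∈ Icc a b,
      ((∃ e : ℕ → ℝ, e 0 = x ∧ (∀ i, e i ∈ Icc a b) ∧ (∀ i, f (e (i + 1)) = e i) ∧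
        Tendsto e atTop (𝓝 a)) ↔ x ∈ Icc a (f c)) := by
  obtain ⟨⟨hac, hcb, hcont, hmap, _, hmono⟩, _, _, _⟩ := hf
  have hab : a ≤ b := le_trans hac.le hcb.le
  have hanti : StrictAntiOn f (Icc c b) := by
    rcases hmono with ⟨_, h⟩ | ⟨h, _⟩
    · exact h
    · exfalso
      have h1 := h (left_mem_Icc.mpr hac.le) (right_mem_Icc.mpr hac.le) hac
      have h2 := hmax (left_mem_Icc.mpr hac.le) (right_mem_Icc.mpr hac.le) hac
      linarith
  -- max value is f c
  have hfmax : ∀ y ∈ Icc a b, f y ≤ f c := by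
    intro y hy
    rcases le_or_gt y c with h | h
    · exact hmax.monotoneOn ⟨hy.1, h⟩ (right_mem_Icc.mpr hac.le) h
    · exact hanti.antitoneOn (left_mem_Icc.mpr hcb.le) ⟨h.le, hy.2⟩ h.le
  -- f is above the diagonal on (a, c]
  have hdiag : ∀ y ∈ Ioc a c, y < f y := by
    intro y hy
    by_contra hle
    push_neg at hle
    have hyb : y ≤ b := le_trans hy.2 hcb.le
    have hsub : MapsTo f (Icc a y) (Icc a y) := by
      intro t ht
      refine ⟨(hmap ⟨ht.1, le_trans ht.2 hyb⟩).1, ?_⟩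
      calc f t ≤ f y := hmax.monotoneOn ⟨ht.1, le_trans ht.2 hy.2⟩ ⟨hy.1.le, hy.2⟩ ht.2
        _ ≤ y := hle
    obtain ⟨k, hk⟩ := hnohom a y le_rfl hy.1 hyb
    have himg : f^[k] '' Icc a y ⊆ Icc a y := ((hsub.iterate k)).image_subset
    have hc : c ∈ Ioo a y := by
      have := interior_mono himg hk
      rwa [interior_Icc] at this
    exact absurd hc.2 (not_lt.mpr hy.2)
  have hcfc : c < f c := hdiag c ⟨hac, le_rfl⟩
  -- preimages on the left branch
  have hpre : ∀ y ∈ Icc a (f c), ∃ z, z ∈ Icc a c ∧ f z = y ∧ z ≤ y := by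
    intro y hy
    have hsub : Icc (f a) (f c) ⊆ f '' Icc a c :=
      intermediate_value_Icc hac.le (hcont.mono (Icc_subset_Icc le_rfl hcb.le))
    obtain ⟨w, hw, hfw⟩ := hsub (by rw [hfa.1]; exact hy)
    refine ⟨w, hw, hfw, ?_⟩
    rcases eq_or_lt_of_le hw.1 with h | h
    · exact h ▸ hy.1
    · exact le_of_lt (hfw ▸ hdiag w ⟨h, hw.2⟩)
  choose! g hg1 hg2 hg3 using hpre
  intro x hx
  constructor
  · rintro ⟨e, he0, heD, hef, _⟩
    refine ⟨hx.1, ?_⟩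
    have h1 := hef 0
    rw [he0] at h1
    rw [← h1]
    exact hfmax _ (heD 1)
  · intro hxc
    set e : ℕ → ℝ := fun n => g^[n] x with he
    have hstep : ∀ n, e (n + 1) = g (e n) := by
      intro n; simp [he, Function.iterate_succ_apply']
    have hinv : ∀ n, e n ∈ Icc a (f c) := by
      intro n
      induction n with
      | zero => simpa [he] using hxc
      | succ n ih =>
        rw [hstep]
        exact Icc_subset_Icc le_rfl hcfc.le (hg1 _ ih)
    have hmem1 : ∀ n, e (n + 1) ∈ Icc a c := fun n => (hstep n) ▸ hg1 _ (hinv n)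
    have hfe : ∀ n, f (e (n + 1)) = e n := fun n => by rw [hstep]; exact hg2 _ (hinv n)
    have hante : Antitone e := by
      apply antitone_nat_of_succ_le
      intro n
      rw [hstep]
      exact hg3 _ (hinv n)
    have hbdd : BddBelow (Set.range e) := ⟨a, by rintro _ ⟨n, rfl⟩; exact (hinv n).1⟩
    have htend : Tendsto e atTop (𝓝 (⨅ n, e n)) := tendsto_atTop_ciInf hante hbdd
    set L := ⨅ n, e n with hL
    have haL : a ≤ L := le_ciInf fun n => (hinv n).1
    have hLc : L ≤ c := le_trans (ciInf_le hbdd 1) (hmem1 0).2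
    have hLab : L ∈ Icc a b := ⟨haL, le_trans hLc hcb.le⟩
    have htend1 : Tendsto (fun n => e (n + 1)) atTop (𝓝 L) :=
      htend.comp (tendsto_add_atTop_nat 1)
    have htendw : Tendsto (fun n => e (n + 1)) atTop (𝓝[Icc a b] L) := by
      apply tendsto_nhdsWithin_of_tendsto_nhds_of_eventually_within _ htend1
      exact Eventually.of_forall fun n => Icc_subset_Icc le_rfl hcb.le (hmem1 n)
    have hfL : f L = L := by
      have h1 : Tendsto (fun n => f (e (n + 1))) atTop (𝓝 (f L)) :=
        (hcont L hLab).tendsto.comp htendw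
      have h2 : Tendsto (fun n => f (e (n + 1))) atTop (𝓝 L) := by
        simpa only [hfe] using htend
      exact tendsto_nhds_unique h1 h2
    have hLa : L = a := by
      by_contra hne
      have : a < L := lt_of_le_of_ne haL (Ne.symm hne)
      have := hdiag L ⟨this, hLc⟩
      rw [hfL] at this
      exact lt_irrefl _ this
    refine ⟨e, by simp [he], fun i => Icc_subset_Icc le_rfl ?_ (hinv i), hfe, hLa ▸ htend⟩
    exact (hmap ⟨hac.le, hcb.le⟩).2
end
end
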